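/- No uncommitted blocks when no more swaps are enabled (Lemma 3): in the block-labelled execution setting, assume T is nonempty, the block of the maximum element of T is committed, and no adjacent pair (a, b) of T is swappable. Then the block of every element of T is committed. -/
import Mathlib


/-- Mover labels assigned to transitions: right mover, non-mover, left mover. -/
inductive Label where
  | R | N | L
deriving DecidableEq

open Classical in
/-- The label of a transition `t`: `R` if its block is uncommitted or `t` precedes the
commit transition of its block; `N` if `t` is the commit transition of its (committed)
block; `L` if `t` follows the commit transition of its (committed) block. -/
noncomputable def label {T β : Type*} [LinearOrder T]
    (block : T → β) (Com : Set β) (commit : β → T) (t : T) : Label :=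
  if block t ∈ Com then
    if t < commit (block t) then .R
    else if t = commit (block t) then .N
    else .L
  else .R

/-- The pair `(a, b)` (with `a < b` in execution order) is swappable. The linear order
on `β` plays the role of the arbitrary fixed total order `<_O` on blocks. -/
def Swappable {T β : Type*} [LinearOrder T] [LinearOrder β]
    (block : T → β) (Com : Set β) (commit : β → T) (a b : T) : Prop :=
  (block a ∉ Com ∧ block b ∈ Com) ∨
  (block a ∈ Com ∧ block b ∈ Com ∧ commit (block b) < commit (block a)) ∨
  (block a ∉ Com ∧ block b ∉ Com ∧ block b < block a)

/-- Elements `a < b` are adjacent if no element lies strictly between them. -/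
def Adjacent {T : Type*} [LinearOrder T] (a b : T) : Prop :=
  a < b ∧ ¬ ∃ c, a < c ∧ c < b

/-- No uncommitted blocks when no more swaps are enabled: if the block of the maximum
transition is committed and no adjacent pair is swappable, then every block occurring
in the execution is committed. -/
theorem no_uncommitted_blocks {T β : Type*} [LinearOrder T] [Fintype T] [LinearOrder β]
    (block : T → β) (Com : Set β) (commit : β → T)
    (hcommit : ∀ b ∈ Com, (∃ t, block t = b) → block (commit b) = b)
    (m : T) (hmax : ∀ t, t ≤ m) (hmCom : block m ∈ Com)
    (hnoswap : ∀ a b : T, Adjacent a b → ¬ Swappable block Com commit a b) :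
    ∀ t : T, block t ∈ Com := by
  classical
  by_contra h
  push_neg at h
  obtain ⟨t, ht⟩ := h
  -- the set of uncommitted transitions is nonempty
  let S : Finset T := Finset.univ.filter (fun x => block x ∉ Com)
  have hSne : S.Nonempty := ⟨t, by simp [S, ht]⟩
  set s := S.max' hSne with hs
  have hsS : s ∈ S := S.max'_mem hSne
  have hsCom : block s ∉ Com := by simpa [S] using hsS
  have hsm : s < m := lt_of_le_of_ne (hmax s) (fun h => hsCom (h ▸ hmCom))
  -- the successor of s
  let U : Finset T := Finset.univ.filter (fun x => s < x)
  have hUne : U.Nonempty := ⟨m, by simp [U, hsm]⟩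
  set b := U.min' hUne with hb
  have hbU : b ∈ U := U.min'_mem hUne
  have hsb : s < b := by simpa [U] using hbU
  have hadj : Adjacent s b := by
    refine ⟨hsb, ?_⟩
    rintro ⟨c, hc1, hc2⟩
    exact absurd (U.min'_le c (by simp [U, hc1])) (not_le.mpr hc2)
  have hbCom : block b ∈ Com := by
    by_contra hbc
    exact absurd (S.le_max' b (by simp [S, hbc])) (not_le.mpr hsb)
  exact hnoswap s b hadj (Or.inl ⟨hsCom, hbCom⟩)
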